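/- arXiv:1606.06261 — 2 statements merged into one kernel-verified Lean document; each statement's English description precedes it below -/
import Mathlib

section
/- Let A be a commutative ℝ-algebra, Q : A → A an ℝ-linear map, and c, v₁, v₂, v₃, v₄ ∈ A. In the ring B = A[ε₁,ε₂,ε₃,ε₄]/(ε₁², ε₂², ε₃², ε₄²), set v = ε₁v₁ + ε₂v₂ + ε₃v₃ + ε₄v₄ (extending Q coefficientwise to B). Then there exists a unique u ∈ B lying in the ideal generated by (ε₁,ε₂,ε₃,ε₄) satisfying the fixed-point equation u = v − Q(c·u⁴), and the coefficient of ε₁ε₂ε₃ε₄ in u equals −24·Q(c·v₁v₂v₃v₄). -/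
/-!
Modulo the ideal `(ε₁², …, ε₄²)`, a `u` without constant term can be written as `∑ εᵢ pᵢ`.
The summands square to zero, so `u⁴ = 4! ∏ εᵢ pᵢ`; and since `ε₁ε₂ε₃ε₄` kills every `εⱼ`, each
`pᵢ` may be replaced by its constant term, the `εᵢ`-coefficient `aᵢ` of `u`. Hence
`u⁴ ≡ 24 a₁a₂a₃a₄ ε₁ε₂ε₃ε₄`, and the fixed-point equation becomes
`u ≡ ∑ εᵢvᵢ − Q(24 c a₁a₂a₃a₄) ε₁ε₂ε₃ε₄`. Its `εᵢ`-coefficients force `aᵢ = vᵢ`, which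
determines `u` among the square-free representatives.
-/

open MvPolynomial

/-- The coefficientwise extension of an `ℝ`-linear map `Q : A → A` to polynomials in the
nilpotent parameters `ε₁, ε₂, ε₃, ε₄`. -/
noncomputable def Qext {A : Type*} [CommRing A] [Algebra ℝ A] (Q : A →ₗ[ℝ] A)
    (p : MvPolynomial (Fin 4) A) : MvPolynomial (Fin 4) A :=
  ∑ m ∈ p.support, monomial m (Q (coeff m p))

open Finset
open Finsupp (single)
open scoped Nat

section SquareZero

variable {R : Type*} [CommSemiring R]

theorem add_pow_succ_of_sq_eq_zero {x : R} (hx : x ^ 2 = 0) (y : R) (n : ℕ) :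
    (x + y) ^ (n + 1) = y ^ (n + 1) + (n + 1) * x * y ^ n := by
  induction n with
  | zero => simp [add_comm]
  | succ n ih =>
    calc (x + y) ^ (n + 1 + 1) = (y ^ (n + 1) + (n + 1) * x * y ^ n) * (x + y) := by
          rw [pow_succ, ih]
      _ = y ^ (n + 1 + 1) + ((n + 1 : ℕ) + 1) * x * y ^ (n + 1) + (n + 1) * x ^ 2 * y ^ n := by
          push_cast; ring
      _ = y ^ (n + 1 + 1) + ((n + 1 : ℕ) + 1) * x * y ^ (n + 1) := by simp [hx]

variable {ι : Type*} {x : ι → R}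

theorem sum_pow_card_succ_eq_zero_of_sq_eq_zero (s : Finset ι) (hx : ∀ i ∈ s, x i ^ 2 = 0) :
    (∑ i ∈ s, x i) ^ (#s + 1) = 0 := by
  classical
  induction s using Finset.induction_on with
  | empty => simp
  | insert a s ha ih =>
    rw [forall_mem_insert] at hx
    rw [sum_insert ha, card_insert_of_notMem ha, add_pow_succ_of_sq_eq_zero hx.1, pow_succ,
      ih hx.2]
    simp

theorem sum_pow_card_eq_of_sq_eq_zero (s : Finset ι) (hx : ∀ i ∈ s, x i ^ 2 = 0) :
    (∑ i ∈ s, x i) ^ #s = (#s)! * ∏ i ∈ s, x i := by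
  classical
  induction s using Finset.induction_on with
  | empty => simp
  | insert a s ha ih =>
    rw [forall_mem_insert] at hx
    rw [sum_insert ha, prod_insert ha, card_insert_of_notMem ha, add_pow_succ_of_sq_eq_zero hx.1,
      sum_pow_card_succ_eq_zero_of_sq_eq_zero s hx.2, ih hx.2, Nat.factorial_succ]
    push_cast
    ring

end SquareZero

namespace MvPolynomial

variable {σ : Type*}

section CommSemiring

variable {R : Type*} [CommSemiring R]

variable (σ R) in
noncomputable abbrev idealOfSqVars : Ideal (MvPolynomial σ R) := .span (.range fun i => X i ^ 2)

theorem mem_idealOfSqVars_iff {p : MvPolynomial σ R} :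
    p ∈ idealOfSqVars σ R ↔ ∀ m ∈ p.support, ∃ i, 2 ≤ m i := by
  have hrange : Set.range (fun i => (X i : MvPolynomial σ R) ^ 2) =
      (fun s => monomial s (1 : R)) '' Set.range fun i => single i 2 := by
    rw [← Set.range_comp]
    simp [Function.comp_def, X_pow_eq_monomial]
  simp [idealOfSqVars, hrange, mem_ideal_span_monomial_image, Finsupp.single_le_iff]

theorem coeff_eq_zero_of_mem_idealOfSqVars {p : MvPolynomial σ R} (hp : p ∈ idealOfSqVars σ R)
    {m : σ →₀ ℕ} (hm : ∀ i, m i ≤ 1) : coeff m p = 0 := by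
  by_contra h
  obtain ⟨i, hi⟩ := mem_idealOfSqVars_iff.mp hp m (mem_support_iff.mpr h)
  exact absurd (hm i) (by omega)

theorem mem_idealOfSqVars_of_support_subset {p q : MvPolynomial σ R} (hq : q ∈ idealOfSqVars σ R)
    (hpq : p.support ⊆ q.support) : p ∈ idealOfSqVars σ R :=
  mem_idealOfSqVars_iff.mpr fun m hm => mem_idealOfSqVars_iff.mp hq m (hpq hm)

theorem degreeOf_monomial_le (i : σ) (s : σ →₀ ℕ) (a : R) : degreeOf i (monomial s a) ≤ s i :=
  degreeOf_le_iff.mpr fun m hm => by rw [mem_singleton.mp (support_monomial_subset hm)]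

theorem exists_sum_mul_X_eq_of_constantCoeff_eq_zero [Fintype σ] {u : MvPolynomial σ R}
    (hu : constantCoeff u = 0) : ∃ p : σ → MvPolynomial σ R, ∑ i, p i * X i = u := by
  have hmem : u ∈ Ideal.span (Set.range X) := by
    rw [← Set.image_univ, mem_ideal_span_X_image]
    intro m hm
    have hm0 : m ≠ 0 := by rintro rfl; exact mem_support_iff.mp hm (by rwa [constantCoeff_eq] at hu)
    obtain ⟨i, hi⟩ := Finsupp.ne_iff.mp hm0
    exact ⟨i, Set.mem_univ i, hi⟩
  simpa [smul_eq_mul] using (Submodule.mem_span_range_iff_exists_fun _).mp hmem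

theorem coeff_single_sum_mul_X [Fintype σ] (p : σ → MvPolynomial σ R) (i : σ) :
    coeff (single i 1) (∑ j, p j * X j) = constantCoeff (p i) := by
  classical
  simp [coeff_sum, coeff_mul_X', constantCoeff_eq]

theorem mul_prod_X_mem_idealOfSqVars [Fintype σ] {q : MvPolynomial σ R}
    (hq : constantCoeff q = 0) : q * ∏ i, X i ∈ idealOfSqVars σ R := by
  classical
  obtain ⟨p, rfl⟩ := exists_sum_mul_X_eq_of_constantCoeff_eq_zero hq
  rw [sum_mul]
  refine Ideal.sum_mem _ fun j _ => ?_
  rw [← mul_prod_erase _ _ (mem_univ j),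
    show p j * X j * (X j * ∏ i ∈ univ.erase j, X i) = X j ^ 2 * (p j * ∏ i ∈ univ.erase j, X i)
      by ring]
  exact Ideal.mul_mem_right _ _ (Ideal.subset_span ⟨j, rfl⟩)

end CommSemiring

section CommRing

variable {R : Type*} [CommRing R]

theorem pow_card_sub_monomial_mem_idealOfSqVars [Fintype σ] {u : MvPolynomial σ R}
    (hu : constantCoeff u = 0) :
    u ^ Fintype.card σ - monomial (∑ i, single i 1)
      ((Fintype.card σ)! * ∏ i, coeff (single i 1) u) ∈ idealOfSqVars σ R := by
  obtain ⟨p, rfl⟩ := exists_sum_mul_X_eq_of_constantCoeff_eq_zero hu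
  set n := Fintype.card σ
  have hpow :
      (∑ i, p i * X i) ^ n - (n ! : MvPolynomial σ R) * ∏ i, (p i * X i) ∈ idealOfSqVars σ R := by
    rw [← Ideal.Quotient.eq]
    simp only [map_pow, map_sum, map_mul, map_prod, map_natCast]
    refine sum_pow_card_eq_of_sq_eq_zero univ fun i _ => ?_
    rw [← map_mul, ← map_pow, Ideal.Quotient.eq_zero_iff_mem, mul_pow]
    exact Ideal.mul_mem_left _ _ (Ideal.subset_span ⟨i, rfl⟩)
  have hconst : constantCoeff (∏ i, p i - C (∏ i, constantCoeff (p i))) = 0 := by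
    simp
  have htop : (n ! : MvPolynomial σ R) * ∏ i, (p i * X i) -
      monomial (∑ i, single i 1) (n ! * ∏ i, constantCoeff (p i)) =
      (n ! : MvPolynomial σ R) * ((∏ i, p i - C (∏ i, constantCoeff (p i))) * ∏ i, X i) := by
    have hX : ∏ i, (X i : MvPolynomial σ R) = monomial (∑ i, single i 1) 1 :=
      (monomial_sum_one _ _).symm
    rw [prod_mul_distrib, hX, sub_mul, C_mul_monomial, mul_one, ← C_mul_monomial, map_natCast]
    ring
  simp_rw [coeff_single_sum_mul_X]
  convert Ideal.add_mem _ hpow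
    (Ideal.mul_mem_left _ (n ! : MvPolynomial σ R) (mul_prod_X_mem_idealOfSqVars hconst)) using 1
  rw [← htop]
  ring

theorem eq_of_sub_mem_idealOfSqVars {p q : MvPolynomial σ R} (hp : ∀ i, degreeOf i p ≤ 1)
    (hq : ∀ i, degreeOf i q ≤ 1) (hpq : p - q ∈ idealOfSqVars σ R) : p = q := by
  ext m
  by_cases hm : ∀ i, m i ≤ 1
  · rw [← sub_eq_zero, ← coeff_sub]
    exact coeff_eq_zero_of_mem_idealOfSqVars hpq hm
  · obtain ⟨i, hi⟩ := not_forall.mp hm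
    rw [not_le] at hi
    have hzero (r : MvPolynomial σ R) (hr : ∀ i, degreeOf i r ≤ 1) : coeff m r = 0 :=
      notMem_support_iff.mp fun h => (degreeOf_le_iff.mp (hr i) m h).not_gt hi
    rw [hzero p hp, hzero q hq]

end CommRing

end MvPolynomial

section Qext

variable {A : Type*} [CommRing A] [Algebra ℝ A] (Q : A →ₗ[ℝ] A)

theorem coeff_Qext (p : MvPolynomial (Fin 4) A) (m : Fin 4 →₀ ℕ) :
    coeff m (Qext Q p) = Q (coeff m p) := by
  classical
  rw [Qext, coeff_sum]
  simp only [coeff_monomial, sum_ite_eq', mem_support_iff]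
  split_ifs with h
  · rfl
  · rw [not_not.mp h, map_zero]

theorem Qext_sub (p q : MvPolynomial (Fin 4) A) : Qext Q (p - q) = Qext Q p - Qext Q q := by
  ext m
  simp [coeff_Qext]

theorem Qext_monomial (s : Fin 4 →₀ ℕ) (a : A) : Qext Q (monomial s a) = monomial s (Q a) := by
  classical
  ext m
  simp only [coeff_Qext, coeff_monomial]
  split_ifs <;> simp

theorem Qext_mem_idealOfSqVars {p : MvPolynomial (Fin 4) A} (hp : p ∈ idealOfSqVars (Fin 4) A) :
    Qext Q p ∈ idealOfSqVars (Fin 4) A :=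
  mem_idealOfSqVars_of_support_subset hp fun m hm => mem_support_iff.mpr fun h =>
    mem_support_iff.mp hm (by rw [coeff_Qext, h, map_zero])

end Qext

section Quartic

variable {A : Type*}

theorem single_ne_sum_single_fin_four (i : Fin 4) : single i 1 ≠ ∑ j : Fin 4, single j 1 :=
  fun h => by simpa using congrArg Finsupp.degree h

section CommSemiring

variable [CommSemiring A] (v : Fin 4 → A) (w : A)

noncomputable def linearAddTop : MvPolynomial (Fin 4) A :=
  ∑ j, monomial (single j 1) (v j) + monomial (∑ j, single j 1) w

theorem coeff_single_linearAddTop (i : Fin 4) : coeff (single i 1) (linearAddTop v w) = v i := by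
  classical
  simp [linearAddTop, coeff_sum, coeff_monomial, Finsupp.single_left_inj,
    (single_ne_sum_single_fin_four i).symm]

theorem coeff_zero_linearAddTop : coeff 0 (linearAddTop v w) = 0 := by
  classical
  simp [linearAddTop, coeff_sum, coeff_monomial]

theorem coeff_top_linearAddTop : coeff (∑ j, single j 1) (linearAddTop v w) = w := by
  classical
  simp [linearAddTop, coeff_sum, coeff_monomial, single_ne_sum_single_fin_four]

theorem degreeOf_linearAddTop_le (i : Fin 4) : degreeOf i (linearAddTop v w) ≤ 1 := by
  classical
  refine (degreeOf_add_le _ _ _).trans (max_le ?_ ?_)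
  · refine (degreeOf_sum_le _ _ _).trans (Finset.sup_le fun j _ => ?_)
    refine (degreeOf_monomial_le _ _ _).trans ?_
    rw [Finsupp.single_apply]
    split_ifs <;> omega
  · refine (degreeOf_monomial_le _ _ _).trans ?_
    simp [Finsupp.single_apply]

end CommSemiring

variable [CommRing A] [Algebra ℝ A] (Q : A →ₗ[ℝ] A) (c : A) (v : Fin 4 → A)

theorem sub_fixedPoint_mem_idealOfSqVars_iff {u : MvPolynomial (Fin 4) A} (hu : coeff 0 u = 0) :
    u - (∑ j, monomial (single j 1) (v j) - Qext Q (C c * u ^ 4)) ∈ idealOfSqVars (Fin 4) A ↔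
      u - linearAddTop v (-Q (c * (24 * ∏ i, coeff (single i 1) u))) ∈
        idealOfSqVars (Fin 4) A := by
  have hpow := pow_card_sub_monomial_mem_idealOfSqVars (σ := Fin 4) (u := u)
    (by rwa [constantCoeff_eq])
  norm_num [Nat.factorial] at hpow
  have hdiff : Qext Q (C c * u ^ 4) - monomial (∑ j, single j 1)
      (Q (c * (24 * ∏ i, coeff (single i 1) u))) ∈ idealOfSqVars (Fin 4) A := by
    rw [← Qext_monomial, ← Qext_sub, ← C_mul_monomial, ← mul_sub]
    exact Qext_mem_idealOfSqVars Q (Ideal.mul_mem_left _ _ hpow)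
  rw [iff_comm, ← Ideal.add_mem_iff_left _ hdiff, linearAddTop, map_neg]
  exact iff_of_eq (congrArg (· ∈ idealOfSqVars (Fin 4) A) (by ring))

theorem sub_fixedPoint_mem_idealOfSqVars_iff_eq {u : MvPolynomial (Fin 4) A}
    (hdeg : ∀ i, degreeOf i u ≤ 1) (h0 : coeff 0 u = 0) :
    u - (∑ j, monomial (single j 1) (v j) - Qext Q (C c * u ^ 4)) ∈ idealOfSqVars (Fin 4) A ↔
      u = linearAddTop v (-Q (c * (24 * ∏ i, v i))) := by
  rw [sub_fixedPoint_mem_idealOfSqVars_iff Q c v h0]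
  constructor
  · intro h
    have hu := eq_of_sub_mem_idealOfSqVars hdeg (degreeOf_linearAddTop_le _ _) h
    have hlin (i : Fin 4) : coeff (single i 1) u = v i := by
      rw [hu, coeff_single_linearAddTop]
    rwa [funext hlin] at hu
  · rintro rfl
    simp only [coeff_single_linearAddTop, sub_self, zero_mem]

end Quartic

/-- In `A[ε₁,ε₂,ε₃,ε₄]/(ε₁²,ε₂²,ε₃²,ε₄²)` there is a unique `u` in the ideal `(ε₁,…,ε₄)`
with `u = v − Q(c·u⁴)`, where `v = ε₁v₁+ε₂v₂+ε₃v₃+ε₄v₄`; its `ε₁ε₂ε₃ε₄`-coefficient is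
`−24·Q(c·v₁v₂v₃v₄)`. We work with the reduced (square-free) representatives. -/
theorem quartic_fixed_point_interaction_coeff
    (A : Type*) [CommRing A] [Algebra ℝ A] (Q : A →ₗ[ℝ] A) (c v₁ v₂ v₃ v₄ : A) :
    (∃! u : MvPolynomial (Fin 4) A,
        (∀ i : Fin 4, degreeOf i u ≤ 1) ∧ coeff 0 u = 0 ∧
        u - ((X 0 * C v₁ + X 1 * C v₂ + X 2 * C v₃ + X 3 * C v₄) - Qext Q (C c * u ^ 4))
          ∈ Ideal.span (Set.range fun i : Fin 4 => (X i : MvPolynomial (Fin 4) A) ^ 2)) ∧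
      (∀ u : MvPolynomial (Fin 4) A,
        (∀ i : Fin 4, degreeOf i u ≤ 1) → coeff 0 u = 0 →
        u - ((X 0 * C v₁ + X 1 * C v₂ + X 2 * C v₃ + X 3 * C v₄) - Qext Q (C c * u ^ 4))
          ∈ Ideal.span (Set.range fun i : Fin 4 => (X i : MvPolynomial (Fin 4) A) ^ 2) →
        coeff (Finsupp.single 0 1 + Finsupp.single 1 1 +
            Finsupp.single 2 1 + Finsupp.single 3 1) u
          = -(24 : A) * Q (c * (v₁ * v₂ * v₃ * v₄))) := by
  set v : Fin 4 → A := ![v₁, v₂, v₃, v₄]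
  have hV : X 0 * C v₁ + X 1 * C v₂ + X 2 * C v₃ + X 3 * C v₄ =
      ∑ j, monomial (single j 1) (v j) := by
    simp [Fin.sum_univ_four, v, ← C_mul_X_eq_monomial, mul_comm]
  have hw : -Q (c * (24 * ∏ i, v i)) = -(24 : A) * Q (c * (v₁ * v₂ * v₃ * v₄)) := by
    have h24 (y : A) : Q (24 * y) = 24 * Q y := by simpa [nsmul_eq_mul] using map_nsmul Q 24 y
    rw [mul_left_comm, h24, Fin.prod_univ_four]
    simp [v]
  have hsol (u : MvPolynomial (Fin 4) A) (hdeg : ∀ i, degreeOf i u ≤ 1) (h0 : coeff 0 u = 0) :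
      u - ((X 0 * C v₁ + X 1 * C v₂ + X 2 * C v₃ + X 3 * C v₄) - Qext Q (C c * u ^ 4)) ∈
        idealOfSqVars (Fin 4) A ↔
        u = linearAddTop v (-(24 : A) * Q (c * (v₁ * v₂ * v₃ * v₄))) := by
    rw [hV, ← hw]
    exact sub_fixedPoint_mem_idealOfSqVars_iff_eq Q c v hdeg h0
  refine ⟨⟨_, ⟨degreeOf_linearAddTop_le _ _, coeff_zero_linearAddTop _ _,
    (hsol _ (degreeOf_linearAddTop_le _ _) (coeff_zero_linearAddTop _ _)).mpr rfl⟩,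
    fun u ⟨hdeg, h0, h⟩ => (hsol u hdeg h0).mp h⟩, fun u hdeg h0 h => ?_⟩
  rw [(hsol u hdeg h0).mp h, ← Fin.sum_univ_four fun j => single j 1, coeff_top_linearAddTop]
end

section
/- Let n ≥ 1, let P, σ : ℝⁿ × ℝⁿ → ℝ and γ : ℝⁿ → ℝ be smooth, and set P̃(x,ξ) = e^{2γ(x)}P(x,ξ). Define the Hamiltonian derivative H_P u = Σᵢ (∂_{ξᵢ}P)(∂_{xᵢ}u) − (∂_{xᵢ}P)(∂_{ξᵢ}u) and the function s_P(x,ξ) = Σᵢ ∂²P/∂xᵢ∂ξᵢ. Then at every point (x,ξ) with P(x,ξ) = 0, the identity H_{P̃}σ − (1/2)s_{P̃}·σ = e^{3γ(x)}·[H_P(e^{−γ}σ) − (1/2)s_P·(e^{−γ}σ)] holds, where e^{−γ}σ denotes the function (x,ξ) ↦ e^{−γ(x)}σ(x,ξ). -/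
/-- Partial derivative in the `i`-th base (`x`) direction on phase space `ℝⁿ × ℝⁿ`. -/
noncomputable def pdx (n : ℕ) (u : (Fin n → ℝ) × (Fin n → ℝ) → ℝ)
    (p : (Fin n → ℝ) × (Fin n → ℝ)) (i : Fin n) : ℝ :=
  fderiv ℝ u p (Pi.single i 1, 0)

/-- Partial derivative in the `i`-th fiber (`ξ`) direction on phase space `ℝⁿ × ℝⁿ`. -/
noncomputable def pdxi (n : ℕ) (u : (Fin n → ℝ) × (Fin n → ℝ) → ℝ)
    (p : (Fin n → ℝ) × (Fin n → ℝ)) (i : Fin n) : ℝ :=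
  fderiv ℝ u p (0, Pi.single i 1)

/-- The Hamiltonian derivative `H_P u = Σᵢ (∂_{ξᵢ}P)(∂_{xᵢ}u) − (∂_{xᵢ}P)(∂_{ξᵢ}u)`. -/
noncomputable def HamD (n : ℕ) (P u : (Fin n → ℝ) × (Fin n → ℝ) → ℝ)
    (p : (Fin n → ℝ) × (Fin n → ℝ)) : ℝ :=
  ∑ i : Fin n, (pdxi n P p i * pdx n u p i - pdx n P p i * pdxi n u p i)

/-- The subprincipal quantity `s_P = Σᵢ ∂²P/∂xᵢ∂ξᵢ`. -/
noncomputable def subS (n : ℕ) (P : (Fin n → ℝ) × (Fin n → ℝ) → ℝ)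
    (p : (Fin n → ℝ) × (Fin n → ℝ)) : ℝ :=
  ∑ i : Fin n, pdx n (fun q => pdxi n P q i) p i

lemma fderiv_exp_gamma_mul {n : ℕ} (γ : (Fin n → ℝ) → ℝ) (hγ : ContDiff ℝ (⊤ : ℕ∞) γ) (c : ℝ)
    (u : (Fin n → ℝ) × (Fin n → ℝ) → ℝ) (hu : Differentiable ℝ u)
    (p v : (Fin n → ℝ) × (Fin n → ℝ)) :
    fderiv ℝ (fun q => Real.exp (c * γ q.1) * u q) p v
      = Real.exp (c * γ p.1) * (c * fderiv ℝ γ p.1 v.1 * u p + fderiv ℝ u p v) := by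
  have h1 : HasFDerivAt (fun q : (Fin n → ℝ) × (Fin n → ℝ) => γ q.1)
      ((fderiv ℝ γ p.1).comp (ContinuousLinearMap.fst ℝ (Fin n → ℝ) (Fin n → ℝ))) p :=
    ((hγ.differentiable (by simp)) p.1).hasFDerivAt.comp p hasFDerivAt_fst
  have h2 := h1.const_mul c
  have h3 := (Real.hasDerivAt_exp (c * γ p.1)).comp_hasFDerivAt p h2
  have h4 := h3.mul (hu p).hasFDerivAt
  simp only [Function.comp_def] at h4
  rw [HasFDerivAt.fderiv (f := fun q => Real.exp (c * γ q.1) * u q) h4]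
  simp [ContinuousLinearMap.comp_apply]
  ring

lemma pdx_exp_gamma_mul {n : ℕ} (γ : (Fin n → ℝ) → ℝ) (hγ : ContDiff ℝ (⊤ : ℕ∞) γ) (c : ℝ)
    (u : (Fin n → ℝ) × (Fin n → ℝ) → ℝ) (hu : Differentiable ℝ u)
    (p : (Fin n → ℝ) × (Fin n → ℝ)) (i : Fin n) :
    pdx n (fun q => Real.exp (c * γ q.1) * u q) p i
      = Real.exp (c * γ p.1) * (c * fderiv ℝ γ p.1 (Pi.single i 1) * u p + pdx n u p i) := by
  simpa [pdx] using fderiv_exp_gamma_mul γ hγ c u hu p (Pi.single i 1, 0)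

lemma pdxi_exp_gamma_mul {n : ℕ} (γ : (Fin n → ℝ) → ℝ) (hγ : ContDiff ℝ (⊤ : ℕ∞) γ) (c : ℝ)
    (u : (Fin n → ℝ) × (Fin n → ℝ) → ℝ) (hu : Differentiable ℝ u)
    (p : (Fin n → ℝ) × (Fin n → ℝ)) (i : Fin n) :
    pdxi n (fun q => Real.exp (c * γ q.1) * u q) p i
      = Real.exp (c * γ p.1) * pdxi n u p i := by
  simpa [pdxi] using fderiv_exp_gamma_mul γ hγ c u hu p ((0 : Fin n → ℝ), Pi.single i 1)

/-- The transport-equation computation for conformally related dual metric functions: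
on the characteristic set `{P = 0}`, with `P̃ = e^{2γ}P`,
`H_{P̃}σ − (1/2)s_{P̃}σ = e^{3γ}·(H_P(e^{−γ}σ) − (1/2)s_P·(e^{−γ}σ))`. -/
theorem transport_equation_conformal
    (n : ℕ) (hn : 1 ≤ n)
    (P σ : (Fin n → ℝ) × (Fin n → ℝ) → ℝ) (γ : (Fin n → ℝ) → ℝ)
    (hP : ContDiff ℝ (⊤ : ℕ∞) P) (hσ : ContDiff ℝ (⊤ : ℕ∞) σ) (hγ : ContDiff ℝ (⊤ : ℕ∞) γ) :
    ∀ p : (Fin n → ℝ) × (Fin n → ℝ), P p = 0 →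
      HamD n (fun q => Real.exp (2 * γ q.1) * P q) σ p
          - (1 / 2) * subS n (fun q => Real.exp (2 * γ q.1) * P q) p * σ p
        = Real.exp (3 * γ p.1) *
            (HamD n P (fun q => Real.exp (-γ q.1) * σ q) p
              - (1 / 2) * subS n P p * (Real.exp (-γ p.1) * σ p)) := by
  intro p hP0
  have hdP : Differentiable ℝ P := hP.differentiable (by simp)
  have hdσ : Differentiable ℝ σ := hσ.differentiable (by simp)
  -- differentiability of the first ξ-derivatives of P
  have hdPi : ∀ i : Fin n, Differentiable ℝ (fun q => pdxi n P q i) := by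
    intro i
    have h := (hP.fderiv_right (m := (⊤ : ℕ∞)) (by simp)).clm_apply
      (contDiff_const (c := ((0 : Fin n → ℝ), Pi.single i 1)))
    exact h.differentiable (by simp)
  -- rewrite e^{-γ} as e^{(-1)·γ}
  have hneg : (fun q : (Fin n → ℝ) × (Fin n → ℝ) => Real.exp (-γ q.1) * σ q)
      = (fun q => Real.exp ((-1 : ℝ) * γ q.1) * σ q) := by
    funext q; rw [neg_one_mul]
  rw [hneg]
  -- rewrite inner ξ-derivative of e^{2γ}P
  have hinner : (fun i : Fin n => fun q : (Fin n → ℝ) × (Fin n → ℝ) =>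
      pdxi n (fun r => Real.exp (2 * γ r.1) * P r) q i)
      = fun i q => Real.exp (2 * γ q.1) * pdxi n P q i := by
    funext i q; exact pdxi_exp_gamma_mul γ hγ 2 P hdP q i
  simp only [HamD, subS]
  have hsub1 : ∀ i : Fin n,
      pdx n (fun q => Real.exp (2 * γ q.1) * pdxi n P q i) p i
        = Real.exp (2 * γ p.1) * (2 * fderiv ℝ γ p.1 (Pi.single i 1) * pdxi n P p i
            + pdx n (fun q => pdxi n P q i) p i) := fun i =>
    pdx_exp_gamma_mul γ hγ 2 (fun q => pdxi n P q i) (hdPi i) p i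
  simp only [hsub1, pdx_exp_gamma_mul γ hγ 2 P hdP, pdxi_exp_gamma_mul γ hγ 2 P hdP,
    pdx_exp_gamma_mul γ hγ (-1) σ hdσ, pdxi_exp_gamma_mul γ hγ (-1) σ hdσ, hP0,
    mul_zero, zero_add, add_zero]
  -- exponential identities
  have hne : Real.exp (γ p.1) ≠ 0 := Real.exp_ne_zero _
  have h2 : Real.exp (2 * γ p.1) = Real.exp (γ p.1) * Real.exp (γ p.1) := by
    rw [two_mul, Real.exp_add]
  have h3 : Real.exp (3 * γ p.1)
      = Real.exp (γ p.1) * Real.exp (γ p.1) * Real.exp (γ p.1) := by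
    rw [show (3 : ℝ) * γ p.1 = γ p.1 + (γ p.1 + γ p.1) by ring, Real.exp_add, Real.exp_add]
    ring
  have hm : Real.exp ((-1 : ℝ) * γ p.1) = (Real.exp (γ p.1))⁻¹ := by
    rw [neg_one_mul, Real.exp_neg]
  have hm' : Real.exp (-γ p.1) = (Real.exp (γ p.1))⁻¹ := Real.exp_neg _
  rw [h2, h3, hm, hm']
  simp only [Finset.mul_sum, Finset.sum_mul, mul_sub, ← Finset.sum_sub_distrib]
  refine Finset.sum_congr rfl fun i _ => ?_
  field_simp
  ring
end
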